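/- In a finite MDP with finite action set A, policy π(a|s) > 0, transitions p, and rewarding-outcome encoding U fully predictive of the reward with expected reward function r(u) = E[R | U = u], the action-value function satisfies Q^π(s,a) = r(s,a) + Σ_u r(u) Σ_{k=1}^{T} P^π(U_k = u | S_0 = s) · (w(s,a,u) + 1), where w(s,a,u) = [Σ_{k=1}^T P^π(U_k = u | S_0=s, A_0=a)] / [Σ_{k=1}^T P^π(U_k = u | S_0=s)] - 1 (defined when the denominator is positive), and r(s,a) = E[R_0 | S_0 = s, A_0 = a]. Consequently the advantage is A^π(s,a) = r(s,a) - Σ_{a'} π(a'|s) r(s,a') + Σ_u r(u) w(s,a,u) Σ_{k=1}^T P^π(U_k = u | S_0 = s). -/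

import Mathlib

open Finset

attribute [local instance] Classical.propDecidable

noncomputable section

/-- Probability of an event on a finite weighted space. -/
def Pr {Ω : Type*} [Fintype Ω] (p : Ω → ℝ) (φ : Ω → Prop) : ℝ :=
  ∑ ω ∈ Finset.univ.filter φ, p ω

/-- Conditional probability `P(φ | ψ)`. -/
def cPr {Ω : Type*} [Fintype Ω] (p : Ω → ℝ) (φ ψ : Ω → Prop) : ℝ :=
  Pr p (fun ω => φ ω ∧ ψ ω) / Pr p ψ

/-- Conditional expectation `E[f | ψ]`. -/
def cEx {Ω : Type*} [Fintype Ω] (p : Ω → ℝ) (f : Ω → ℝ) (ψ : Ω → Prop) : ℝ :=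
  (∑ ω ∈ Finset.univ.filter ψ, p ω * f ω) / Pr p ψ

/-! Conditioning on `A_0 = a`, the return is `R_0` plus the rewards at steps `k ≥ 1`. By the law
of total expectation over the outcome `U_k` and full predictivity, `E[R_k | a] = ∑_u r(u) P(U_k = u | a)`,
so `Q(a) = r(a) + ∑_u r(u) OUa(a, u)`, and `OU(u) (w(a, u) + 1) = OUa(a, u)` also when `OU(u) = 0`,
since then `OUa(a, u) = 0`. Averaging over `π`, the law of total probability turns
`∑_a π(a) OUa(a, u)` into `OU(u)`, which gives the advantage. -/

section FiniteProbability

variable {Ω υ : Type*} [Fintype Ω] [Fintype υ] {p : Ω → ℝ}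

theorem Pr_nonneg (hp : ∀ ω, 0 ≤ p ω) (φ : Ω → Prop) : 0 ≤ Pr p φ :=
  sum_nonneg fun ω _ => hp ω

theorem Pr_eq_zero_iff (hp : ∀ ω, 0 ≤ p ω) {φ : Ω → Prop} :
    Pr p φ = 0 ↔ ∀ ω, φ ω → p ω = 0 := by
  simp [Pr, sum_eq_zero_iff_of_nonneg fun ω _ => hp ω]

theorem Pr_and_comm (φ ψ : Ω → Prop) :
    Pr p (fun ω => φ ω ∧ ψ ω) = Pr p (fun ω => ψ ω ∧ φ ω) := by
  simp only [and_comm]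

theorem cPr_eq_zero_of_Pr_eq_zero (hp : ∀ ω, 0 ≤ p ω) {φ : Ω → Prop} (ψ : Ω → Prop)
    (h : Pr p φ = 0) : cPr p φ ψ = 0 := by
  have hand : Pr p (fun ω => φ ω ∧ ψ ω) = 0 :=
    (Pr_eq_zero_iff hp).2 fun ω hω => (Pr_eq_zero_iff hp).1 h ω hω.1
  rw [cPr, hand, zero_div]

theorem Pr_mul_cPr (hp : ∀ ω, 0 ≤ p ω) (φ ψ : Ω → Prop) :
    Pr p ψ * cPr p φ ψ = Pr p (fun ω => φ ω ∧ ψ ω) :=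
  mul_div_cancel_of_imp' fun h =>
    (Pr_eq_zero_iff hp).2 fun ω hω => (Pr_eq_zero_iff hp).1 h ω hω.2

theorem sum_Pr_and_eq_Pr {α : Type*} [Fintype α] (g : Ω → α) (φ : Ω → Prop) :
    ∑ a, Pr p (fun ω => φ ω ∧ g ω = a) = Pr p φ := by
  rw [Pr, ← sum_fiberwise (univ.filter φ) g p]
  refine sum_congr rfl fun a _ => sum_congr ?_ fun _ _ => rfl
  ext ω
  simp

theorem sum_Pr_mul_cPr {α : Type*} [Fintype α] (hp : ∀ ω, 0 ≤ p ω) (g : Ω → α)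
    (φ : Ω → Prop) :
    ∑ a, Pr p (fun ω => g ω = a) * cPr p φ (fun ω => g ω = a) = Pr p φ := by
  simp only [Pr_mul_cPr hp]
  exact sum_Pr_and_eq_Pr g φ

theorem sum_filter_mul_eq_sum_mul_Pr (hp : ∀ ω, 0 ≤ p ω) {f : Ω → ℝ} {ψ : Ω → Prop}
    (g : Ω → υ) {c : υ → ℝ}
    (hc : ∀ u, 0 < Pr p (fun ω => ψ ω ∧ g ω = u) →
      cEx p f (fun ω => ψ ω ∧ g ω = u) = c u) :
    ∑ ω ∈ univ.filter ψ, p ω * f ω = ∑ u, c u * Pr p (fun ω => ψ ω ∧ g ω = u) := by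
  rw [← sum_fiberwise (univ.filter ψ) g]
  refine sum_congr rfl fun u _ => ?_
  rcases (Pr_nonneg hp _).lt_or_eq with hpos | hzero
  · rw [← hc u hpos, cEx, div_mul_cancel₀ _ hpos.ne']
    exact sum_congr (by ext; simp) fun _ _ => rfl
  · rw [← hzero, mul_zero]
    refine sum_eq_zero fun ω hω => ?_
    simp only [mem_filter, mem_univ, true_and] at hω
    rw [(Pr_eq_zero_iff hp).1 hzero.symm ω hω, zero_mul]

theorem cEx_eq_sum_mul_cPr (hp : ∀ ω, 0 ≤ p ω) {f : Ω → ℝ} {ψ : Ω → Prop}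
    (g : Ω → υ) {c : υ → ℝ}
    (hc : ∀ u, 0 < Pr p (fun ω => ψ ω ∧ g ω = u) →
      cEx p f (fun ω => ψ ω ∧ g ω = u) = c u) :
    cEx p f ψ = ∑ u, c u * cPr p (fun ω => g ω = u) ψ := by
  rw [cEx, sum_filter_mul_eq_sum_mul_Pr hp g hc, sum_div]
  refine sum_congr rfl fun u _ => ?_
  rw [cPr, Pr_and_comm, mul_div_assoc]

theorem cEx_sum {ι : Type*} (s : Finset ι) (f : ι → Ω → ℝ) (ψ : Ω → Prop) :
    cEx p (fun ω => ∑ k ∈ s, f k ω) ψ = ∑ k ∈ s, cEx p (f k) ψ := by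
  simp only [cEx, mul_sum, ← sum_div]
  rw [sum_comm]

theorem cEx_sum_range_succ_eq_add_sum_mul_sum_cPr (hp : ∀ ω, 0 ≤ p ω) (T : ℕ)
    (R : ℕ → Ω → ℝ) (U : ℕ → Ω → υ) (ψ : Ω → Prop) (c : υ → ℝ)
    (hc : ∀ k ∈ Icc 1 T, ∀ u, 0 < Pr p (fun ω => ψ ω ∧ U k ω = u) →
      cEx p (R k) (fun ω => ψ ω ∧ U k ω = u) = c u) :
    cEx p (fun ω => ∑ k ∈ range (T + 1), R k ω) ψ
      = cEx p (R 0) ψ + ∑ u, c u * ∑ k ∈ Icc 1 T, cPr p (fun ω => U k ω = u) ψ := by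
  rw [cEx_sum, sum_range_eq_add_Ico _ T.add_one_pos, Ico_add_one_right_eq_Icc,
    sum_congr rfl fun k hk => cEx_eq_sum_mul_cPr hp (U k) (hc k hk), sum_comm]
  simp only [mul_sum]

theorem sum_cPr_eq_zero_of_sum_Pr_eq_zero (hp : ∀ ω, 0 ≤ p ω) {ι : Type*} {s : Finset ι}
    {φ : ι → Ω → Prop} (ψ : Ω → Prop) (h : ∑ k ∈ s, Pr p (φ k) = 0) :
    ∑ k ∈ s, cPr p (φ k) ψ = 0 :=
  sum_eq_zero fun k hk => cPr_eq_zero_of_Pr_eq_zero hp ψ <|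
    (sum_eq_zero_iff_of_nonneg fun k _ => Pr_nonneg hp (φ k)).1 h k hk

end FiniteProbability

theorem cocoa_advantage_decomposition_general
    {Ω α υ : Type*} [Fintype Ω] [Fintype α] [Fintype υ]
    (p : Ω → ℝ) (hp : ∀ ω, 0 < p ω)
    (T : ℕ) (Act : ℕ → Ω → α) (Rw : ℕ → Ω → ℝ) (Uv : ℕ → Ω → υ)
    (pol : α → ℝ) (hpol : ∀ a, pol a = Pr p (fun ω => Act 0 ω = a))
    (rU : υ → ℝ)
    (hfp : ∀ k ∈ Finset.Icc 1 T, ∀ (a : α) (u : υ),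
      0 < Pr p (fun ω => Act 0 ω = a ∧ Uv k ω = u) →
      cEx p (Rw k) (fun ω => Act 0 ω = a ∧ Uv k ω = u) = rU u)
    (a : α) :
    letI Q : α → ℝ := fun a' =>
      cEx p (fun ω => ∑ k ∈ Finset.range (T + 1), Rw k ω) (fun ω => Act 0 ω = a')
    letI r0 : α → ℝ := fun a' => cEx p (Rw 0) (fun ω => Act 0 ω = a')
    letI OU : υ → ℝ := fun u => ∑ k ∈ Finset.Icc 1 T, Pr p (fun ω => Uv k ω = u)
    letI OUa : α → υ → ℝ := fun a' u =>
      ∑ k ∈ Finset.Icc 1 T, cPr p (fun ω => Uv k ω = u) (fun ω => Act 0 ω = a')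
    letI w : α → υ → ℝ := fun a' u => OUa a' u / OU u - 1
    (Q a = r0 a + ∑ u, rU u * (OU u * (w a u + 1)))
    ∧ (Q a - ∑ a', pol a' * Q a')
        = r0 a - (∑ a', pol a' * r0 a') + ∑ u, rU u * w a u * OU u := by
  let Q : α → ℝ := fun a' =>
    cEx p (fun ω => ∑ k ∈ range (T + 1), Rw k ω) (fun ω => Act 0 ω = a')
  let r0 : α → ℝ := fun a' => cEx p (Rw 0) (fun ω => Act 0 ω = a')
  let OU : υ → ℝ := fun u => ∑ k ∈ Icc 1 T, Pr p (fun ω => Uv k ω = u)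
  let OUa : α → υ → ℝ := fun a' u =>
    ∑ k ∈ Icc 1 T, cPr p (fun ω => Uv k ω = u) (fun ω => Act 0 ω = a')
  let w : α → υ → ℝ := fun a' u => OUa a' u / OU u - 1
  show (Q a = r0 a + ∑ u, rU u * (OU u * (w a u + 1)))
    ∧ (Q a - ∑ a', pol a' * Q a') = r0 a - (∑ a', pol a' * r0 a') + ∑ u, rU u * w a u * OU u
  have hp' : ∀ ω, 0 ≤ p ω := fun ω => (hp ω).le
  have hQ : ∀ a', Q a' = r0 a' + ∑ u, rU u * OUa a' u := fun a' =>
    cEx_sum_range_succ_eq_add_sum_mul_sum_cPr hp' T Rw Uv _ rU fun k hk => hfp k hk a'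
  have hw : ∀ a' u, OU u * (w a' u + 1) = OUa a' u := fun a' u => by
    rw [sub_add_cancel]
    exact mul_div_cancel_of_imp' (sum_cPr_eq_zero_of_sum_Pr_eq_zero hp' _)
  have hOU : ∀ u, ∑ a', pol a' * OUa a' u = OU u := fun u => by
    simp only [OUa, hpol, mul_sum]
    rw [sum_comm]
    exact sum_congr rfl fun k _ => sum_Pr_mul_cPr hp' (Act 0) _
  have hV : ∑ a', pol a' * Q a' = ∑ a', pol a' * r0 a' + ∑ u, rU u * OU u := by
    simp only [hQ, mul_add, sum_add_distrib, mul_sum, ← hOU]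
    rw [sum_comm]
    simp only [mul_left_comm]
  refine ⟨by simp only [hQ, hw], ?_⟩
  have hwOU : ∀ u, rU u * w a u * OU u = rU u * OUa a u - rU u * OU u := fun u => by
    rw [← hw a u]
    ring
  rw [hQ, hV, sum_congr rfl fun u _ => hwOU u, sum_sub_distrib]
  ring

/-- In a finite-horizon MDP (trajectory space conditioned on `S_0 = s`,
rewards `R_k`, actions `A_k`, rewarding-outcome encodings `U_k` fully predictive of the
reward with `E[R_k | A_0 = a, U_k = u] = r(u)`), the action-value function satisfies
`Q(s,a) = r(s,a) + ∑_u r(u) ∑_{k=1}^T P(U_k = u | S_0 = s) (w(s,a,u) + 1)`, with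
`w(s,a,u) = [∑_k P(U_k = u | s, a)]/[∑_k P(U_k = u | s)] - 1`, and consequently
`A(s,a) = r(s,a) - ∑_{a'} π(a') r(s,a') + ∑_u r(u) w(s,a,u) ∑_k P(U_k = u | s)`. -/
theorem cocoa_advantage_decomposition
    {Ω α υ : Type*} [Fintype Ω] [Fintype α] [Fintype υ]
    (p : Ω → ℝ) (hp : ∀ ω, 0 < p ω) (hsum : ∑ ω, p ω = 1)
    (T : ℕ) (Act : ℕ → Ω → α) (Rw : ℕ → Ω → ℝ) (Uv : ℕ → Ω → υ)
    (pol : α → ℝ) (hpol : ∀ a, pol a = Pr p (fun ω => Act 0 ω = a))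
    (hpos : ∀ a, 0 < pol a)
    (rU : υ → ℝ)
    (hfp : ∀ k ∈ Finset.Icc 1 T, ∀ (a : α) (u : υ),
      0 < Pr p (fun ω => Act 0 ω = a ∧ Uv k ω = u) →
      cEx p (Rw k) (fun ω => Act 0 ω = a ∧ Uv k ω = u) = rU u)
    (a : α) :
    letI Q : α → ℝ := fun a' =>
      cEx p (fun ω => ∑ k ∈ Finset.range (T + 1), Rw k ω) (fun ω => Act 0 ω = a')
    letI r0 : α → ℝ := fun a' => cEx p (Rw 0) (fun ω => Act 0 ω = a')
    letI OU : υ → ℝ := fun u => ∑ k ∈ Finset.Icc 1 T, Pr p (fun ω => Uv k ω = u)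
    letI OUa : α → υ → ℝ := fun a' u =>
      ∑ k ∈ Finset.Icc 1 T, cPr p (fun ω => Uv k ω = u) (fun ω => Act 0 ω = a')
    letI w : α → υ → ℝ := fun a' u => OUa a' u / OU u - 1
    (Q a = r0 a + ∑ u, rU u * (OU u * (w a u + 1)))
    ∧ (Q a - ∑ a', pol a' * Q a')
        = r0 a - (∑ a', pol a' * r0 a') + ∑ u, rU u * w a u * OU u :=
  cocoa_advantage_decomposition_general p hp T Act Rw Uv pol hpol rU hfp a

end
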